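/- arXiv:1506.06558 — 4 statements merged into one kernel-verified Lean document; each statement's English description precedes it below -/
import Mathlib

section
/- The optimal value of the linear program: maximize K₁ + K₂ subject to K₁ ≤ min(max(L−N,0), N, M), K₂ ≤ min(N/2, L, M), K₁ + K₂ ≤ M, and K₁ + 2K₂ ≤ N, over nonnegative reals K₁, K₂, equals min(L/2, N, M) whenever L > N > 0 and M > 0. -/
theorem lp_optimal_value (M N L : ℝ) (hM : 0 < M) (hN : 0 < N) (hLN : L > N) :
    IsGreatest
      {s : ℝ | ∃ K₁ K₂ : ℝ, 0 ≤ K₁ ∧ 0 ≤ K₂ ∧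
        K₁ ≤ min (max (L - N) 0) (min N M) ∧
        K₂ ≤ min (N / 2) (min L M) ∧
        K₁ + K₂ ≤ M ∧ K₁ + 2 * K₂ ≤ N ∧ s = K₁ + K₂}
      (min (L / 2) (min N M)) := by
  have hmax : max (L - N) 0 = L - N := max_eq_left (by linarith)
  constructor
  · show ∃ K₁ K₂ : ℝ, _
    rcases le_total (L / 2) (min N M) with h | h
    · -- optimum is L/2
      rw [min_eq_left h]
      rw [le_min_iff] at h
      refine ⟨L - N, N - L / 2, by linarith, by linarith [h.1], ?_, ?_, by linarith, by linarith, by ring⟩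
      · rw [hmax, le_min_iff, le_min_iff]
        refine ⟨le_refl _, by linarith [h.1], by linarith [h.2]⟩
      · rw [le_min_iff, le_min_iff]
        refine ⟨by linarith [h.1], by linarith, by linarith [h.2]⟩
    · rw [min_eq_right h]
      rcases le_total N M with hNM | hNM
      · -- optimum is N
        rw [min_eq_left hNM] at h ⊢
        refine ⟨N, 0, le_of_lt hN, le_refl _, ?_, ?_, by linarith, by linarith, by ring⟩
        · rw [hmax, le_min_iff]
          exact ⟨by linarith, le_refl _⟩
        · rw [le_min_iff, le_min_iff]
          exact ⟨by linarith, by linarith, le_of_lt hM⟩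
      · -- optimum is M
        rw [min_eq_right hNM] at h ⊢
        rcases le_total M (L - N) with hc | hc
        · refine ⟨M, 0, le_of_lt hM, le_refl _, ?_, ?_, by linarith, by linarith, by ring⟩
          · rw [hmax, le_min_iff]
            exact ⟨hc, le_refl _⟩
          · rw [le_min_iff, le_min_iff]
            exact ⟨by linarith, by linarith, le_of_lt hM⟩
        · refine ⟨L - N, M - (L - N), by linarith, by linarith, ?_, ?_, by linarith, by linarith, by ring⟩
          · rw [hmax, le_min_iff]
            exact ⟨le_refl _, hc⟩
          · rw [le_min_iff, le_min_iff]
            exact ⟨by linarith, by linarith, by linarith⟩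
  · rintro s ⟨K₁, K₂, h1, h2, hK1, hK2, hsum, hN2, rfl⟩
    rw [hmax, le_min_iff, le_min_iff] at hK1
    rw [le_min_iff, le_min_iff]
    exact ⟨by linarith [hK1.1], by linarith, hsum⟩
end

section
/- For positive reals M, N, L, the maximum of min{M, n, l, max(n,l)/2} over all nonnegative reals n, l with n + l = N + L equals min{M, (N+L)/3}. -/
theorem antenna_split_optimum (M N L : ℝ) (hM : 0 < M) (hN : 0 < N) (hL : 0 < L) :
    IsGreatest
      {v : ℝ | ∃ n l : ℝ, 0 ≤ n ∧ 0 ≤ l ∧ n + l = N + L ∧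
        v = min M (min n (min l (max n l / 2)))}
      (min M ((N + L) / 3)) := by
  constructor
  · refine ⟨(N + L) / 3, 2 * (N + L) / 3, by positivity, by positivity, by ring, ?_⟩
    have h1 : (N + L) / 3 ≤ 2 * (N + L) / 3 := by nlinarith
    rw [max_eq_right h1]
    have hc : (2 * (N + L) / 3) / 2 = (N + L) / 3 := by ring
    rw [hc, min_eq_right h1, min_self]
  · rintro v ⟨n, l, hn, hl, hsum, rfl⟩
    set v := min M (min n (min l (max n l / 2))) with hv
    have h1 : v ≤ M := min_le_left _ _
    have h2 : v ≤ n := le_trans (min_le_right _ _) (min_le_left _ _)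
    have h3 : v ≤ l :=
      le_trans (min_le_right _ _) (le_trans (min_le_right _ _) (min_le_left _ _))
    have h4 : v ≤ max n l / 2 :=
      le_trans (min_le_right _ _) (le_trans (min_le_right _ _) (min_le_right _ _))
    apply le_min h1
    rcases le_total n l with h | h
    · rw [max_eq_right h] at h4; linarith
    · rw [max_eq_left h] at h4; linarith
end

section
/- Let M > N be positive integers. Let F, G ∈ ℂ^{M×M} be partitioned as F = [[F11, F12],[F21, F22]], G = [[G11, G12],[G21, G22]] with F11, G11 ∈ ℂ^{N×N} and F22, G22 ∈ ℂ^{(M−N)×(M−N)} both invertible, and suppose the Schur-complement difference (F11 − F12 F22⁻¹ F21) − (G11 − G12 G22⁻¹ G21) is invertible. Then for every a ∈ ℂ^{N×N}, letting E(a) denote the M×M matrix which equals a in the top-left N×N block and zero elsewhere, rk(F + E(a)) + rk(G + E(a)) ≥ 2M − N. -/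
open Matrix

/-- The product of two submodules is linearly equivalent to their Prod. -/
def myProdEquiv {R M M₂ : Type*} [Ring R] [AddCommGroup M] [AddCommGroup M₂]
    [Module R M] [Module R M₂] (p : Submodule R M) (q : Submodule R M₂) :
    (p.prod q) ≃ₗ[R] p × q where
  toFun x := (⟨(x : M × M₂).1, x.2.1⟩, ⟨(x : M × M₂).2, x.2.2⟩)
  invFun y := ⟨((y.1 : M), (y.2 : M₂)), ⟨y.1.2, y.2.2⟩⟩
  map_add' x y := rfl
  map_smul' c x := rfl
  left_inv x := rfl
  right_inv y := rfl

lemma rank_fromBlocks_diag {n m : Type*} [Fintype n] [Fintype m] [DecidableEq n] [DecidableEq m]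
    (A : Matrix n n ℂ) (D : Matrix m m ℂ) :
    (fromBlocks A 0 0 D).rank = A.rank + D.rank := by
  classical
  set e := LinearEquiv.sumArrowLequivProdArrow n m ℂ ℂ with he
  have key : (fromBlocks A 0 0 D).mulVecLin =
      (e.symm.toLinearMap.comp ((A.mulVecLin.prodMap D.mulVecLin).comp e.toLinearMap)) := by
    apply LinearMap.ext
    intro x
    funext i
    cases i <;>
      simp [e, LinearEquiv.sumArrowLequivProdArrow, Equiv.sumArrowEquivProdArrow,
        fromBlocks_mulVec]
  rw [Matrix.rank, key]
  rw [LinearMap.range_comp, LinearMap.range_comp, LinearEquiv.range, Submodule.map_top]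
  rw [LinearEquiv.finrank_map_eq]
  have hr : LinearMap.range (A.mulVecLin.prodMap D.mulVecLin)
      = (LinearMap.range A.mulVecLin).prod (LinearMap.range D.mulVecLin) := by
    apply le_antisymm
    · rintro ⟨y1, y2⟩ ⟨⟨x1, x2⟩, h⟩
      simp only [LinearMap.prodMap_apply, Prod.mk.injEq] at h
      exact ⟨⟨x1, h.1⟩, ⟨x2, h.2⟩⟩
    · rintro ⟨y1, y2⟩ ⟨⟨x1, h1⟩, ⟨x2, h2⟩⟩
      refine ⟨(x1, x2), ?_⟩
      simp [LinearMap.prodMap_apply, h1, h2]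
  rw [hr, Matrix.rank, Matrix.rank]
  rw [(myProdEquiv _ _).finrank_eq, Module.finrank_prod]

lemma guttman {n m : Type*} [Fintype n] [Fintype m] [DecidableEq n] [DecidableEq m]
    (A : Matrix n n ℂ) (B : Matrix n m ℂ) (C : Matrix m n ℂ) (D : Matrix m m ℂ)
    (hD : IsUnit D) :
    (fromBlocks A B C D).rank = (A - B * D⁻¹ * C).rank + Fintype.card m := by
  classical
  have : Invertible D := hD.invertible
  have hinv : ⅟D = D⁻¹ := invOf_eq_nonsing_inv D
  rw [fromBlocks_eq_of_invertible₂₂ A B C D]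
  have h1 : ((fromBlocks (1 : Matrix n n ℂ) (B * ⅟D) 0 1)).det = 1 := by
    rw [det_fromBlocks_zero₂₁]; simp
  have h2 : ((fromBlocks (1 : Matrix n n ℂ) 0 (⅟D * C) (1 : Matrix m m ℂ))).det = 1 := by
    rw [det_fromBlocks_zero₁₂]; simp
  rw [Matrix.rank_mul_eq_left_of_isUnit_det _ _ (by rw [h2]; exact isUnit_one)]
  rw [Matrix.rank_mul_eq_right_of_isUnit_det _ _ (by rw [h1]; exact isUnit_one)]
  rw [rank_fromBlocks_diag, hinv, Matrix.rank_of_isUnit D hD]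

lemma myRank_neg {n m : Type*} [Fintype n] (Y : Matrix m n ℂ) : (-Y).rank = Y.rank := by
  have hneg : (-Y).mulVecLin = -(Y.mulVecLin) := by
    apply LinearMap.ext; intro x; simp [Matrix.neg_mulVec]
  rw [Matrix.rank, Matrix.rank, hneg, LinearMap.range_neg]

lemma myRank_add_le {n m : Type*} [Fintype n] (X Y : Matrix m n ℂ) :
    (X + Y).rank ≤ X.rank + Y.rank := by
  rw [Matrix.rank, Matrix.rank, Matrix.rank, Matrix.mulVecLin_add]
  have hle : LinearMap.range (X.mulVecLin + Y.mulVecLin)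
      ≤ LinearMap.range X.mulVecLin ⊔ LinearMap.range Y.mulVecLin := by
    rintro _ ⟨x, rfl⟩
    exact Submodule.add_mem_sup ⟨x, rfl⟩ ⟨x, rfl⟩
  exact le_trans (Submodule.finrank_mono hle)
    (Submodule.finrank_add_le_finrank_add_finrank _ _)

theorem converse_N_eq_L_lt_M (M N : ℕ) (hMN : N < M)
    (F11 G11 : Matrix (Fin N) (Fin N) ℂ)
    (F12 G12 : Matrix (Fin N) (Fin (M - N)) ℂ)
    (F21 G21 : Matrix (Fin (M - N)) (Fin N) ℂ)
    (F22 G22 : Matrix (Fin (M - N)) (Fin (M - N)) ℂ)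
    (hF22 : IsUnit F22) (hG22 : IsUnit G22)
    (hSchur : IsUnit ((F11 - F12 * F22⁻¹ * F21) - (G11 - G12 * G22⁻¹ * G21))) :
    ∀ a : Matrix (Fin N) (Fin N) ℂ,
      2 * M - N ≤
        (Matrix.fromBlocks F11 F12 F21 F22 + Matrix.fromBlocks a 0 0 0).rank +
        (Matrix.fromBlocks G11 G12 G21 G22 + Matrix.fromBlocks a 0 0 0).rank := by
  intro a
  have hFa : Matrix.fromBlocks F11 F12 F21 F22 + Matrix.fromBlocks a 0 0 0
      = Matrix.fromBlocks (F11 + a) F12 F21 F22 := by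
    rw [Matrix.fromBlocks_add]; simp
  have hGa : Matrix.fromBlocks G11 G12 G21 G22 + Matrix.fromBlocks a 0 0 0
      = Matrix.fromBlocks (G11 + a) G12 G21 G22 := by
    rw [Matrix.fromBlocks_add]; simp
  rw [hFa, hGa, guttman _ _ _ _ hF22, guttman _ _ _ _ hG22]
  set X := (F11 + a) - F12 * F22⁻¹ * F21 with hX
  set Y := (G11 + a) - G12 * G22⁻¹ * G21 with hY
  have hXY : X - Y = (F11 - F12 * F22⁻¹ * F21) - (G11 - G12 * G22⁻¹ * G21) := by
    rw [hX, hY]; abel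
  have hrk : N ≤ X.rank + Y.rank := by
    have h1 : (X - Y).rank = N := by
      rw [hXY, Matrix.rank_of_isUnit _ hSchur, Fintype.card_fin]
    calc N = (X - Y).rank := h1.symm
      _ = (X + (-Y)).rank := by rw [sub_eq_add_neg]
      _ ≤ X.rank + (-Y).rank := myRank_add_le X (-Y)
      _ = X.rank + Y.rank := by rw [myRank_neg]
  have hcard : Fintype.card (Fin (M - N)) = M - N := Fintype.card_fin _
  rw [hcard]
  omega
end

section
/- Let the block matrix B = [[H20, H21, 0],[H10, 0, H12],[0, H01, −H02]] ∈ ℂ^{3M×3M} have M×M blocks H_{ij} with generic (i.i.d. continuous) entries in the nonzero positions. Then B is invertible almost surely, so the only solution t, v1, v2 ∈ ℂ^M of B·[t; v1; v2] = 0 is the trivial one. -/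
open MeasureTheory


private lemma mv_null_fin : ∀ (n : ℕ) (p : MvPolynomial (Fin n) ℂ), p ≠ 0 →
    volume {x : Fin n → ℂ | MvPolynomial.eval x p = 0} = 0 := by
  intro n
  induction n with
  | zero =>
    intro p hp
    have hempty : {x : Fin 0 → ℂ | MvPolynomial.eval x p = 0} = ∅ := by
      ext x
      simp only [Set.mem_setOf_eq, Set.mem_empty_iff_false, iff_false]
      intro h
      apply hp
      rw [p.eq_C_of_isEmpty, MvPolynomial.eval_C] at h
      rw [p.eq_C_of_isEmpty, h, map_zero]
    simp [hempty]
  | succ n ih =>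
    intro p hp
    set q : Polynomial (MvPolynomial (Fin n) ℂ) := MvPolynomial.finSuccEquiv ℂ n p with hqdef
    have hq0 : q ≠ 0 := by
      intro h
      apply hp
      have := (MvPolynomial.finSuccEquiv ℂ n).injective (a₁ := p) (a₂ := 0)
      simp only [map_zero] at this
      exact this (by rw [← hqdef, h])
    have hc : q.leadingCoeff ≠ 0 := Polynomial.leadingCoeff_ne_zero.mpr hq0
    set T : Set (ℂ × (Fin n → ℂ)) :=
      {y | MvPolynomial.eval (Fin.cons y.1 y.2) p = 0} with hTdef
    have hcons1 : Continuous fun y : ℂ × (Fin n → ℂ) => (Fin.cons y.1 y.2 : Fin (n+1) → ℂ) := by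
      refine continuous_pi fun i => ?_
      refine Fin.cases ?_ (fun j => ?_) i
      · simpa using continuous_fst
      · simpa [Function.comp_def] using (continuous_apply j).comp continuous_snd
    have hTmeas : MeasurableSet T :=
      (isClosed_eq ((p.continuous_eval).comp hcons1) continuous_const).measurableSet
    set T' : Set ((Fin n → ℂ) × ℂ) :=
      {y | MvPolynomial.eval (Fin.cons y.2 y.1) p = 0} with hT'def
    have hcons2 : Continuous fun y : (Fin n → ℂ) × ℂ => (Fin.cons y.2 y.1 : Fin (n+1) → ℂ) := by
      refine continuous_pi fun i => ?_
      refine Fin.cases ?_ (fun j => ?_) i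
      · simpa using continuous_snd
      · simpa [Function.comp_def] using (continuous_apply j).comp continuous_fst
    have hT'meas : MeasurableSet T' :=
      (isClosed_eq ((p.continuous_eval).comp hcons2) continuous_const).measurableSet
    have hT'0 : ((volume : Measure (Fin n → ℂ)).prod (volume : Measure ℂ)) T' = 0 := by
      rw [Measure.measure_prod_null hT'meas]
      have hae : ∀ᵐ s : Fin n → ℂ, MvPolynomial.eval s q.leadingCoeff ≠ 0 := by
        rw [ae_iff]
        simpa using ih q.leadingCoeff hc
      filter_upwards [hae] with s hs
      have hslice : Prod.mk s ⁻¹' T'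
          = {a : ℂ | (q.map (MvPolynomial.eval s)).IsRoot a} := by
        ext a
        simp only [Set.mem_preimage, hT'def, Set.mem_setOf_eq, Polynomial.IsRoot]
        rw [MvPolynomial.eval_eq_eval_mv_eval', ← hqdef]
      have hmapne : q.map (MvPolynomial.eval s) ≠ 0 := by
        intro h
        apply hs
        have h2 := congrArg (fun r : Polynomial ℂ => r.coeff q.natDegree) h
        simp only [Polynomial.coeff_map, Polynomial.coeff_zero] at h2
        rw [Polynomial.leadingCoeff]
        exact h2
      simp only [Pi.zero_apply]
      rw [hslice]
      exact (Polynomial.finite_setOf_isRoot hmapne).measure_zero _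
    have hT0 : (volume : Measure (ℂ × (Fin n → ℂ))) T = 0 := by
      have hswap : Prod.swap ⁻¹' T = T' := by
        ext y
        simp [hTdef, hT'def, Prod.swap]
      calc (volume : Measure (ℂ × (Fin n → ℂ))) T
          = (((volume : Measure (Fin n → ℂ)).prod (volume : Measure ℂ)).map Prod.swap) T := by
            rw [Measure.prod_swap]; rfl
        _ = ((volume : Measure (Fin n → ℂ)).prod (volume : Measure ℂ)) (Prod.swap ⁻¹' T) := by
            rw [Measure.map_apply measurable_swap hTmeas]
        _ = 0 := by rw [hswap]; exact hT'0
    have hpre : (MeasurableEquiv.piFinSuccAbove (fun _ : Fin (n+1) => ℂ) 0) ⁻¹' T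
        = {x : Fin (n+1) → ℂ | MvPolynomial.eval x p = 0} := by
      ext x
      simp only [Set.mem_preimage, hTdef, Set.mem_setOf_eq,
        MeasurableEquiv.piFinSuccAbove_apply]
      have : (Fin.cons (x 0) (fun j => x ((0 : Fin (n+1)).succAbove j)) : Fin (n+1) → ℂ) = x := by
        funext i
        refine Fin.cases ?_ (fun j => ?_) i
        · simp
        · simp [Fin.zero_succAbove]
      constructor
      · intro hx
        rw [← this]
        convert hx using 3
        rfl
      · intro hx
        rw [show (MvPolynomial.eval (Fin.cons ((Fin.insertNthEquiv (fun _ => ℂ) 0).symm x).1 ((Fin.insertNthEquiv (fun _ => ℂ) 0).symm x).2)) p = (MvPolynomial.eval x) p from by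
          congr 1
          rw [← this]
          congr 1]
        exact hx
    rw [← hpre]
    exact ((volume_preserving_piFinSuccAbove (fun _ : Fin (n+1) => ℂ) 0).measure_preimage
      hTmeas.nullMeasurableSet).trans hT0

private lemma mv_null {ι : Type} [Fintype ι] (p : MvPolynomial ι ℂ) (hp : p ≠ 0) :
    volume {x : ι → ℂ | MvPolynomial.eval x p = 0} = 0 := by
  classical
  set n := Fintype.card ι with hn
  set e : ι ≃ Fin n := Fintype.equivFin ι with he
  set q : MvPolynomial (Fin n) ℂ := MvPolynomial.rename e p with hq
  have hq0 : q ≠ 0 := by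
    intro h
    apply hp
    have := MvPolynomial.rename_injective (R := ℂ) (e : ι → Fin n) e.injective
    apply this
    rw [← hq, h, map_zero]
  have hSmeas : MeasurableSet {x : ι → ℂ | MvPolynomial.eval x p = 0} :=
    (isClosed_eq p.continuous_eval continuous_const).measurableSet
  set E : (Fin n → ℂ) ≃ᵐ (ι → ℂ) :=
    MeasurableEquiv.piCongrLeft (fun _ : ι => ℂ) e.symm with hE
  have hmp : MeasurePreserving E volume volume :=
    volume_measurePreserving_piCongrLeft (fun _ : ι => ℂ) e.symm
  have hpre : E ⁻¹' {x : ι → ℂ | MvPolynomial.eval x p = 0}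
      = {y : Fin n → ℂ | MvPolynomial.eval y q = 0} := by
    ext y
    have hEy : (E y : ι → ℂ) = y ∘ e := by
      funext i
      rw [hE]
      conv_lhs => rw [← e.symm_apply_apply i]
      rw [MeasurableEquiv.coe_piCongrLeft]
      exact Equiv.piCongrLeft_apply_apply (fun _ : ι => ℂ) e.symm y (e i)
    simp only [Set.mem_preimage, Set.mem_setOf_eq, hq, MvPolynomial.eval_rename, hEy]
  calc volume {x : ι → ℂ | MvPolynomial.eval x p = 0}
      = volume (E ⁻¹' {x : ι → ℂ | MvPolynomial.eval x p = 0}) :=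
        (hmp.measure_preimage hSmeas.nullMeasurableSet).symm
    _ = 0 := by rw [hpre]; exact mv_null_fin n q hq0

private lemma flat_mp (M : ℕ) :
    MeasurePreserving (fun (h : Fin 6 → Fin M → Fin M → ℂ) (x : Fin 6 × Fin M × Fin M) =>
      h x.1 x.2.1 x.2.2) volume volume := by
  have hmeas : Measurable (fun (h : Fin 6 → Fin M → Fin M → ℂ) (x : Fin 6 × Fin M × Fin M) =>
      h x.1 x.2.1 x.2.2) := measurable_pi_iff.mpr fun x =>
    (measurable_pi_apply x.2.2).comp ((measurable_pi_apply x.2.1).comp (measurable_pi_apply x.1))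
  refine ⟨hmeas, ?_⟩
  refine (Measure.pi_eq fun s hs => ?_).symm
  rw [Measure.map_apply hmeas (MeasurableSet.univ_pi hs)]
  have hpre : (fun (h : Fin 6 → Fin M → Fin M → ℂ) (x : Fin 6 × Fin M × Fin M) =>
        h x.1 x.2.1 x.2.2) ⁻¹' (Set.univ.pi s)
      = Set.univ.pi (fun a => Set.univ.pi fun b => Set.univ.pi fun c => s (a, b, c)) := by
    ext h
    simp only [Set.mem_preimage, Set.mem_univ_pi]
    exact ⟨fun H a b c => H (a, b, c), fun H x => H x.1 x.2.1 x.2.2⟩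
  rw [hpre]
  rw [volume_pi_pi]
  simp_rw [volume_pi_pi]
  rw [Fintype.prod_prod_type]
  congr 1
  funext a
  rw [Fintype.prod_prod_type]

theorem alignment_impossible_generic (M : ℕ)
    (μ : Measure (Fin 6 → Fin M → Fin M → ℂ)) [IsProbabilityMeasure μ]
    (hac : μ ≪ volume) :
    μ {h : Fin 6 → Fin M → Fin M → ℂ |
        IsUnit (Matrix.fromBlocks
          (Matrix.of (h 0))                               -- H20
          (Matrix.fromCols (Matrix.of (h 1)) 0)        -- [H21, 0]
          (Matrix.fromRows (Matrix.of (h 2)) 0)           -- [H10; 0]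
          (Matrix.fromBlocks 0 (Matrix.of (h 3)) (Matrix.of (h 4))
            (-(Matrix.of (h 5))))                         -- [[0,H12],[H01,-H02]]
        ).det} = 1 := by
  classical
  set Bmat : (Fin 6 → Fin M → Fin M → ℂ) →
      Matrix (Fin M ⊕ (Fin M ⊕ Fin M)) (Fin M ⊕ (Fin M ⊕ Fin M)) ℂ := fun h =>
    Matrix.fromBlocks (Matrix.of (h 0)) (Matrix.fromCols (Matrix.of (h 1)) 0)
      (Matrix.fromRows (Matrix.of (h 2)) 0)
      (Matrix.fromBlocks 0 (Matrix.of (h 3)) (Matrix.of (h 4)) (-(Matrix.of (h 5)))) with hBmat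
  set flat : (Fin 6 → Fin M → Fin M → ℂ) → (Fin 6 × Fin M × Fin M → ℂ) :=
    fun h x => h x.1 x.2.1 x.2.2 with hflat
  -- the generic determinant polynomial
  set Xm : Fin 6 → Matrix (Fin M) (Fin M) (MvPolynomial (Fin 6 × Fin M × Fin M) ℂ) :=
    fun k => Matrix.of fun i j => MvPolynomial.X (k, i, j) with hXm
  set P : Matrix (Fin M ⊕ (Fin M ⊕ Fin M)) (Fin M ⊕ (Fin M ⊕ Fin M))
      (MvPolynomial (Fin 6 × Fin M × Fin M) ℂ) :=
    Matrix.fromBlocks (Xm 0) (Matrix.fromCols (Xm 1) 0) (Matrix.fromRows (Xm 2) 0)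
      (Matrix.fromBlocks 0 (Xm 3) (Xm 4) (-(Xm 5))) with hP
  set p : MvPolynomial (Fin 6 × Fin M × Fin M) ℂ := P.det with hp
  -- key evaluation identity
  have key : ∀ h : Fin 6 → Fin M → Fin M → ℂ,
      MvPolynomial.eval (flat h) p = (Bmat h).det := by
    intro h
    rw [hp, RingHom.map_det]
    congr 1
    ext i j
    rcases i with i | (i | i) <;> rcases j with j | (j | j) <;>
      simp [hP, hXm, hBmat, hflat, RingHom.mapMatrix_apply, Matrix.map_apply,
        Matrix.neg_apply, MvPolynomial.eval_X]
  -- nonvanishing at a particular point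
  set h₀ : Fin 6 → Fin M → Fin M → ℂ :=
    fun k => if k = 0 ∨ k = 3 ∨ k = 4 then (fun i j => (1 : Matrix (Fin M) (Fin M) ℂ) i j)
      else 0 with hh₀
  have hB₀ : Bmat h₀ = Matrix.fromBlocks 1 0 0
      (Matrix.fromBlocks 0 1 1 0 : Matrix (Fin M ⊕ Fin M) (Fin M ⊕ Fin M) ℂ) := by
    have hrfl : Bmat h₀ = Matrix.fromBlocks (Matrix.of (h₀ 0))
        (Matrix.fromCols (Matrix.of (h₀ 1)) 0) (Matrix.fromRows (Matrix.of (h₀ 2)) 0)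
        (Matrix.fromBlocks 0 (Matrix.of (h₀ 3)) (Matrix.of (h₀ 4)) (-(Matrix.of (h₀ 5)))) := rfl
    rw [hrfl]
    have e0 : Matrix.of (h₀ 0) = (1 : Matrix (Fin M) (Fin M) ℂ) := by
      ext i j; simp only [hh₀, Matrix.of_apply]; rw [if_pos (by decide)]
    have e3 : Matrix.of (h₀ 3) = (1 : Matrix (Fin M) (Fin M) ℂ) := by
      ext i j; simp only [hh₀, Matrix.of_apply]; rw [if_pos (by decide)]
    have e4 : Matrix.of (h₀ 4) = (1 : Matrix (Fin M) (Fin M) ℂ) := by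
      ext i j; simp only [hh₀, Matrix.of_apply]; rw [if_pos (by decide)]
    have e1 : Matrix.of (h₀ 1) = (0 : Matrix (Fin M) (Fin M) ℂ) := by
      ext i j; simp only [hh₀, Matrix.of_apply]; rw [if_neg (by decide)]; rfl
    have e2 : Matrix.of (h₀ 2) = (0 : Matrix (Fin M) (Fin M) ℂ) := by
      ext i j; simp only [hh₀, Matrix.of_apply]; rw [if_neg (by decide)]; rfl
    have e5 : Matrix.of (h₀ 5) = (0 : Matrix (Fin M) (Fin M) ℂ) := by
      ext i j; simp only [hh₀, Matrix.of_apply]; rw [if_neg (by decide)]; rfl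
    rw [e0, e1, e2, e3, e4, e5, Matrix.fromCols_zero, Matrix.fromRows_zero, neg_zero]
  have hdet₀ : (Bmat h₀).det ≠ 0 := by
    rw [hB₀]
    set D : Matrix (Fin M ⊕ Fin M) (Fin M ⊕ Fin M) ℂ := Matrix.fromBlocks 0 1 1 0 with hD
    have hDD : D * D = 1 := by
      rw [hD, Matrix.fromBlocks_multiply]
      simp [Matrix.fromBlocks_one]
    have hdetD : D.det * D.det = 1 := by
      rw [← Matrix.det_mul, hDD, Matrix.det_one]
    rw [Matrix.det_fromBlocks_zero₂₁, Matrix.det_one, one_mul]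
    intro h
    rw [h, mul_zero] at hdetD
    exact zero_ne_one hdetD
  have hpne : p ≠ 0 := by
    intro h
    apply hdet₀
    rw [← key h₀, h, map_zero]
  -- the complement is null
  set S := {h : Fin 6 → Fin M → Fin M → ℂ | IsUnit (Bmat h).det} with hS
  have hScompl : Sᶜ = flat ⁻¹' {x : Fin 6 × Fin M × Fin M → ℂ | MvPolynomial.eval x p = 0} := by
    ext h
    simp only [hS, Set.mem_compl_iff, Set.mem_setOf_eq, Set.mem_preimage, isUnit_iff_ne_zero,
      not_not, key h]
  have hmeas0 : MeasurableSet {x : Fin 6 × Fin M × Fin M → ℂ | MvPolynomial.eval x p = 0} :=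
    (isClosed_eq p.continuous_eval continuous_const).measurableSet
  have hvol : volume Sᶜ = 0 := by
    rw [hScompl]
    rw [(flat_mp M).measure_preimage hmeas0.nullMeasurableSet]
    exact mv_null p hpne
  have hμ : μ Sᶜ = 0 := hac hvol
  have hge : (1 : ENNReal) ≤ μ S := by
    calc (1 : ENNReal) = μ (S ∪ Sᶜ) := by rw [Set.union_compl_self]; exact measure_univ.symm
      _ ≤ μ S + μ Sᶜ := measure_union_le _ _
      _ = μ S := by rw [hμ, add_zero]
  exact le_antisymm prob_le_one hge
end
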